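/- arXiv:1610.08623 — 2 statements merged into one kernel-verified Lean document; each statement's English description precedes it below -/
import Mathlib

section
/- Let H be a real Hilbert space, x₁,…,x_N ∈ H, and let V = span{x₁,…,x_N}. Suppose J : H → ℝ has the form J(f) = R(⟨f,x₁⟩,…,⟨f,x_N⟩) + Ω(‖f‖) where Ω : ℝ≥0 → ℝ is monotone nondecreasing and R : ℝ^N → ℝ is arbitrary. If J attains a minimum on H, then J attains a minimum at some point of V. -/
/-!
Replacing a minimiser `f` by its orthogonal projection `v` onto `V = span {x i}` changes
neither the inner products `⟪f, x i⟫` (since `f - v ⊥ V`) nor increases `‖f‖`, so the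
monotone `Ω` gives `J v ≤ J f`.
-/

open scoped InnerProductSpace

namespace Submodule

variable {𝕜 E : Type*} [RCLike 𝕜] [NormedAddCommGroup E] [InnerProductSpace 𝕜 E]

theorem inner_starProjection_left_of_mem (K : Submodule 𝕜 E) [K.HasOrthogonalProjection]
    (f : E) {y : E} (hy : y ∈ K) : ⟪K.starProjection f, y⟫_𝕜 = ⟪f, y⟫_𝕜 := by
  rw [inner_starProjection_left_eq_right, starProjection_eq_self_iff.mpr hy]

variable {H ι : Type*} [NormedAddCommGroup H] [InnerProductSpace ℝ H]

theorem representer_starProjection_le (K : Submodule ℝ H) [K.HasOrthogonalProjection]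
    {x : ι → H} (hx : ∀ i, x i ∈ K) (R : (ι → ℝ) → ℝ) {Ω : ℝ → ℝ} (hΩ : Monotone Ω) (f : H) :
    R (fun i => ⟪K.starProjection f, x i⟫_ℝ) + Ω ‖K.starProjection f‖ ≤
      R (fun i => ⟪f, x i⟫_ℝ) + Ω ‖f‖ := by
  simp only [K.inner_starProjection_left_of_mem f (hx _)]
  exact add_le_add_right (hΩ (K.norm_starProjection_apply_le f)) _

end Submodule

theorem stmt_2_general {H : Type*} [NormedAddCommGroup H] [InnerProductSpace ℝ H]
    (N : ℕ) (x : Fin N → H) (R : (Fin N → ℝ) → ℝ) (Ω : ℝ → ℝ) (hΩ : Monotone Ω)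
    (J : H → ℝ)
    (hJ : ∀ f, J f = R (fun i => inner ℝ f (x i)) + Ω ‖f‖)
    (hmin : ∃ f₀, ∀ f, J f₀ ≤ J f) :
    ∃ v ∈ Submodule.span ℝ (Set.range x), ∀ f, J v ≤ J f := by
  obtain ⟨f₀, hf₀⟩ := hmin
  set V := Submodule.span ℝ (Set.range x)
  have : FiniteDimensional ℝ V := FiniteDimensional.span_of_finite ℝ (Set.finite_range x)
  refine ⟨V.starProjection f₀, V.starProjection_apply_mem f₀, fun f => ?_⟩
  calc J (V.starProjection f₀)
      ≤ J f₀ := by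
        rw [hJ, hJ]
        exact V.representer_starProjection_le (fun i => Submodule.subset_span ⟨i, rfl⟩) R hΩ f₀
    _ ≤ J f := hf₀ f

theorem stmt_2 {H : Type*} [NormedAddCommGroup H] [InnerProductSpace ℝ H] [CompleteSpace H]
    (N : ℕ) (x : Fin N → H) (R : (Fin N → ℝ) → ℝ) (Ω : ℝ → ℝ) (hΩ : Monotone Ω)
    (J : H → ℝ)
    (hJ : ∀ f, J f = R (fun i => inner ℝ f (x i)) + Ω ‖f‖)
    (hmin : ∃ f₀, ∀ f, J f₀ ≤ J f) :
    ∃ v ∈ Submodule.span ℝ (Set.range x), ∀ f, J v ≤ J f :=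
  stmt_2_general N x R Ω hΩ J hJ hmin
end

section
/- For all x, y ∈ [0,1], min(x,y) − x·y = ∑_{m=1}^∞ 2·sin(πmx)·sin(πmy)/(π²m²), with the series converging absolutely. -/
/-!
Writing `2 sin(πmx) sin(πmy) = cos(πm(x-y)) - cos(πm(x+y))` splits the series into two cosine
series `∑ cos(πms)/m²`, the Fourier series of the second Bernoulli polynomial:
`∑ cos(πms)/m² = π²(s²/4 - |s|/2 + 1/6)` for `|s| ≤ 2`. Taking the difference at `s = x - y`
and `s = x + y` leaves `(x + y - |x - y|)/2 - xy = min x y - xy`. Absolute convergence is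
comparison with `∑ 1/m²`.
-/

open Real

lemma bernoulli_two_map_eval (t : ℝ) :
    ((Polynomial.bernoulli 2).map (algebraMap ℚ ℝ)).eval t = t ^ 2 - t + 1 / 6 := by
  simp [Polynomial.bernoulli_def, Finset.sum_range_succ, bernoulli_eq_bernoulli'_of_ne_one,
    bernoulli'_two]
  ring

lemma hasSum_cos_pi_mul_div_sq {s : ℝ} (hs : |s| ≤ 2) :
    HasSum (fun n : ℕ => cos (π * n * s) / n ^ 2) (π ^ 2 * (s ^ 2 / 4 - |s| / 2 + 1 / 6)) := by
  have hmem : |s| / 2 ∈ Set.Icc (0 : ℝ) 1 := ⟨by positivity, by linarith⟩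
  have h := hasSum_one_div_nat_pow_mul_cos one_ne_zero hmem
  rw [Nat.mul_one, bernoulli_two_map_eval] at h
  convert h.congr_fun fun n => ?_ using 1
  · rw [div_pow, sq_abs, Nat.factorial_two, Nat.cast_ofNat]
    ring
  · rw [show 2 * π * n * (|s| / 2) = |π * n * s| by
      rw [abs_mul, abs_of_nonneg (by positivity : (0 : ℝ) ≤ π * n)]; ring, cos_abs]
    ring

lemma hasSum_two_mul_sin_mul_sin_div_sq {x y : ℝ} (hx : x ∈ Set.Icc (0 : ℝ) 1)
    (hy : y ∈ Set.Icc (0 : ℝ) 1) :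
    HasSum (fun n : ℕ => 2 * sin (π * n * x) * sin (π * n * y) / (π ^ 2 * n ^ 2))
      (min x y - x * y) := by
  obtain ⟨hx0, hx1⟩ := hx
  obtain ⟨hy0, hy1⟩ := hy
  have hdiff : |x - y| ≤ 2 := abs_le.mpr ⟨by linarith, by linarith⟩
  have hsum : |x + y| ≤ 2 := abs_le.mpr ⟨by linarith, by linarith⟩
  have h :=
    ((hasSum_cos_pi_mul_div_sq hdiff).sub (hasSum_cos_pi_mul_div_sq hsum)).div_const (π ^ 2)
  have hvalue : min x y - x * y = (π ^ 2 * ((x - y) ^ 2 / 4 - |x - y| / 2 + 1 / 6)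
      - π ^ 2 * ((x + y) ^ 2 / 4 - |x + y| / 2 + 1 / 6)) / π ^ 2 := by
    rw [abs_of_nonneg (by linarith : 0 ≤ x + y)]
    field_simp
    rcases le_total x y with hxy | hxy
    · rw [min_eq_left hxy, abs_of_nonpos (by linarith)]
      ring
    · rw [min_eq_right hxy, abs_of_nonneg (by linarith)]
      ring
  rw [hvalue]
  refine h.congr_fun fun n => ?_
  rw [two_mul_sin_mul_sin]
  field_simp

lemma summable_abs_two_mul_sin_mul_sin_div_sq (a b : ℕ → ℝ) :
    Summable (fun n : ℕ => |2 * sin (a n) * sin (b n) / (π ^ 2 * n ^ 2)|) := by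
  have hinv : Summable (fun n : ℕ => ((n : ℝ) ^ 2)⁻¹) :=
    Real.summable_nat_pow_inv.mpr one_lt_two
  refine (hinv.mul_left (2 / π ^ 2)).of_nonneg_of_le (fun n => abs_nonneg _) fun n => ?_
  have hsin : |2 * sin (a n) * sin (b n)| ≤ 2 := by
    rw [abs_mul, abs_mul, abs_two]
    nlinarith [abs_sin_le_one (a n), abs_sin_le_one (b n), abs_nonneg (sin (a n)),
      abs_nonneg (sin (b n))]
  calc |2 * sin (a n) * sin (b n) / (π ^ 2 * n ^ 2)|
      = |2 * sin (a n) * sin (b n)| / π ^ 2 * ((n : ℝ) ^ 2)⁻¹ := by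
        rw [abs_div, abs_of_nonneg (by positivity : (0 : ℝ) ≤ π ^ 2 * n ^ 2)]
        ring
    _ ≤ 2 / π ^ 2 * ((n : ℝ) ^ 2)⁻¹ := by gcongr

theorem stmt_6 (x y : ℝ) (hx : x ∈ Set.Icc (0:ℝ) 1) (hy : y ∈ Set.Icc (0:ℝ) 1) :
    Summable (fun m : ℕ+ => |2 * Real.sin (π * m * x) * Real.sin (π * m * y) / (π ^ 2 * m ^ 2)|) ∧
    min x y - x * y
      = ∑' m : ℕ+, 2 * Real.sin (π * m * x) * Real.sin (π * m * y) / (π ^ 2 * m ^ 2) := by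
  refine ⟨summable_pnat_iff_summable_nat.mpr
    (summable_abs_two_mul_sin_mul_sin_div_sq (fun n => π * n * x) (fun n => π * n * y)), ?_⟩
  refine (hasSum_pnat_iff
    (f := fun n : ℕ => 2 * sin (π * n * x) * sin (π * n * y) / (π ^ 2 * n ^ 2)) |>.mpr ?_).tsum_eq.symm
  simp [hasSum_two_mul_sin_mul_sin_div_sq hx hy]
end
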